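/- If a mechanism φ is separation responsive, separation upper invariant, and separation lower invariant, then it is multi-separation strategyproof: for every multi-separation (R,R'), φ(R) stochastically dominates φ(R') at R and φ(R') stochastically dominates φ(R) at R'. -/

import Mathlib

open Finset

/-- An ordered partition `M_1 P ... P M_K` of a finite set `α` is encoded by a rank
function `R : α → ℕ`: alternative `a` lies in class `M_{R a}` (0-indexed), and lower
rank means more preferred.  `j` is weakly preferred to `a` iff `R j ≤ R a`. -/
def classOf {α : Type} [Fintype α] (R : α → ℕ) (k : ℕ) : Finset α :=
  Finset.univ.filter fun a => R a = k

/-- `probOf x A = x_A = ∑_{a ∈ A} x_a`. -/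
def probOf {α : Type} [Fintype α] (x : α → ℝ) (A : Finset α) : ℝ := ∑ a ∈ A, x a

/-- `x` is a lottery (probability distribution) on `α`. -/
def IsLottery {α : Type} [Fintype α] (x : α → ℝ) : Prop :=
  (∀ a, 0 ≤ x a) ∧ ∑ a, x a = 1

/-- `x` first order-stochastically dominates `y` at `R`. -/
def SD {α : Type} [Fintype α] (R : α → ℕ) (x y : α → ℝ) : Prop :=
  ∀ a : α, ∑ j ∈ Finset.univ.filter (fun j => R j ≤ R a), x j ≥
           ∑ j ∈ Finset.univ.filter (fun j => R j ≤ R a), y j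

/-- A rank function is canonical if its range is an initial segment of ℕ,
i.e. all indifference classes `M_1, …, M_K` are nonempty. -/
def Canonical {α : Type} (R : α → ℕ) : Prop :=
  ∀ a : α, ∀ k, k ≤ R a → ∃ b, R b = k

/-- Strategyproofness: for all preference orders `R, R'`, `φ(R)` first
order-stochastically dominates `φ(R')` at `R`. -/
def Strategyproof {α : Type} [Fintype α] (φ : (α → ℕ) → α → ℝ) : Prop :=
  ∀ R R' : α → ℕ, Canonical R → Canonical R' → SD R (φ R) (φ R')

/-- `(R, R')` is a separation with split at index `κ`: `R'` splits the indifference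
class `M_κ` of `R` into two nonempty parts `M_κ^1 = classOf R' κ` (preferred) and
`M_κ^2 = classOf R' (κ+1)`, all other classes unchanged (classes below `κ` keep their
rank, classes above `κ` are shifted by one). -/
def IsSeparation {α : Type} [Fintype α] (R R' : α → ℕ) (κ : ℕ) : Prop :=
  Canonical R ∧
  (∀ a, R a < κ → R' a = R a) ∧
  (∀ a, R a = κ → R' a = κ ∨ R' a = κ + 1) ∧
  (∀ a, κ < R a → R' a = R a + 1) ∧
  (∃ a, R a = κ ∧ R' a = κ) ∧
  (∃ a, R a = κ ∧ R' a = κ + 1)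

/-- Separation upper invariance: the probability of every class ranked above the
split class is unchanged. -/
def SepUpperInvariant {α : Type} [Fintype α] (φ : (α → ℕ) → α → ℝ) : Prop :=
  ∀ R R' κ, IsSeparation R R' κ →
    ∀ k < κ, probOf (φ R) (classOf R k) = probOf (φ R') (classOf R k)

/-- Separation lower invariance: the probability of every class ranked below the
split class is unchanged. -/
def SepLowerInvariant {α : Type} [Fintype α] (φ : (α → ℕ) → α → ℝ) : Prop :=
  ∀ R R' κ, IsSeparation R R' κ →
    ∀ k, κ < k → probOf (φ R) (classOf R k) = probOf (φ R') (classOf R k)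

/-- Separation responsiveness: `φ_{M_κ^1}(R') ≥ φ_{M_κ^1}(R)` and
`φ_{M_κ^2}(R') ≤ φ_{M_κ^2}(R)`. -/
def SepResponsive {α : Type} [Fintype α] (φ : (α → ℕ) → α → ℝ) : Prop :=
  ∀ R R' κ, IsSeparation R R' κ →
    probOf (φ R') (classOf R' κ) ≥ probOf (φ R) (classOf R' κ) ∧
    probOf (φ R') (classOf R' (κ + 1)) ≤ probOf (φ R) (classOf R' (κ + 1))

/-- Separation directness: if the probability of some class changes under a
separation, then both the probabilities of `M_κ^1` and of `M_κ^2` change. -/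
def SepDirect {α : Type} [Fintype α] (φ : (α → ℕ) → α → ℝ) : Prop :=
  ∀ R R' κ, IsSeparation R R' κ →
    (∃ k, probOf (φ R) (classOf R k) ≠ probOf (φ R') (classOf R k)) →
    probOf (φ R') (classOf R' κ) ≠ probOf (φ R) (classOf R' κ) ∧
    probOf (φ R') (classOf R' (κ + 1)) ≠ probOf (φ R) (classOf R' (κ + 1))


/-- `(R,R')` is a multi-separation: `R'` refines `R`, i.e. `R'` is obtained from `R`
by partitioning each indifference class `M_k` of `R` into `L_k ≥ 1` strictly ranked
subclasses, preserving the between-class rankings of `R`. -/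
def IsMultiSeparation {α : Type} [Fintype α] (R R' : α → ℕ) : Prop :=
  Canonical R ∧ Canonical R' ∧ ∀ a b, R a < R b → R' a < R' b

/-! A multi-separation is reached from `R` by finitely many single separations, each splitting
one class of the current order along `R'`; we induct on the number of pairs that `R` ranks
indifferent and `R'` ranks strictly. Along a separation `(R, S)`, upper and lower invariance (and
total probability one) fix the probability of every upper contour set of `R`, while responsiveness
raises that of the one new upper contour set of `S`. Since every upper contour set of `R` is also
one of any refinement of `R`, this gives dominance at `R`. An upper contour set `U` of `R'` is either a union
of classes of `R`, hence an upper contour set of `R` that no separation of `R` affects, or it cuts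
a class of `R`, and splitting that class along `U` makes `U` the new upper contour set. -/

section Refinement

variable {α : Type}

def IsRefinement (R R' : α → ℕ) : Prop :=
  ∀ a b, R a < R b → R' a < R' b

theorem Canonical.le_of_isRefinement {R R' : α → ℕ} (hR : Canonical R)
    (h : IsRefinement R R') (u : α) : R u ≤ R' u := by
  induction hk : R u using Nat.strong_induction_on generalizing u with
  | _ k ih =>
    rcases k with _ | k
    · exact Nat.zero_le _
    · obtain ⟨b, hb⟩ := hR u k (by omega)
      have := h b u (by omega)
      have := ih k (by omega) b hb
      omega

def splitClass (R R' : α → ℕ) (κ c : ℕ) : α → ℕ :=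
  fun j => if R j < κ ∨ (R j = κ ∧ R' j ≤ c) then R j else R j + 1

theorem isRefinement_splitClass {R R' : α → ℕ} (h : IsRefinement R R') (κ c : ℕ) :
    IsRefinement (splitClass R R' κ c) R' := by
  intro p q hpq
  unfold splitClass at hpq
  rcases lt_trichotomy (R p) (R q) with hR | hR | hR
  · exact h p q hR
  all_goals split_ifs at hpq <;> omega

end Refinement

section Contour

variable {α : Type} [Fintype α]

def upperContour (R : α → ℕ) (m : ℕ) : Finset α :=
  univ.filter fun j => R j ≤ m

theorem sd_iff_probOf_upperContour {R : α → ℕ} {x y : α → ℝ} :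
    SD R x y ↔ ∀ a, probOf y (upperContour R (R a)) ≤ probOf x (upperContour R (R a)) :=
  Iff.rfl

theorem exists_upperContour_eq_of_isRefinement {R R' : α → ℕ} (h : IsRefinement R R')
    (a : α) : ∃ w, upperContour R (R a) = upperContour R' (R' w) := by
  obtain ⟨w, hw, hmax⟩ := (upperContour R (R a)).exists_max_image R' ⟨a, by simp [upperContour]⟩
  refine ⟨w, ?_⟩
  simp only [upperContour, mem_filter, mem_univ, true_and] at hw hmax ⊢
  ext j
  simp only [mem_filter, mem_univ, true_and]
  have := h w j
  exact ⟨hmax j, fun hj => by omega⟩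

theorem SD.of_isRefinement {R R' : α → ℕ} {x y : α → ℝ} (h : IsRefinement R R')
    (hsd : SD R' x y) : SD R x y := by
  intro a
  obtain ⟨w, hw⟩ := exists_upperContour_eq_of_isRefinement h a
  exact (congrArg (probOf y) hw).trans_le ((hsd w).trans_eq (congrArg (probOf x) hw).symm)

theorem exists_upperContour_eq_of_saturated {R R' : α → ℕ} (h : IsRefinement R R') {m : ℕ}
    (hsat : ∀ p q, R p = R q → R' p ≤ m → R' q ≤ m) {a : α} (ha : R' a ≤ m) :
    ∃ w, upperContour R' m = upperContour R (R w) := by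
  obtain ⟨w, hw, hmax⟩ := (upperContour R' m).exists_max_image R ⟨a, by simp [upperContour, ha]⟩
  refine ⟨w, ?_⟩
  simp only [upperContour, mem_filter, mem_univ, true_and] at hw hmax ⊢
  ext j
  simp only [mem_filter, mem_univ, true_and]
  refine ⟨hmax j, fun hj => ?_⟩
  rcases hj.lt_or_eq with hj | hj
  · have := h j w hj
    omega
  · exact hsat w j hj.symm hw

theorem upperContour_splitClass {R R' : α → ℕ} (h : IsRefinement R R') {u v : α} {c : ℕ}
    (huv : R u = R v) (hu : R' u ≤ c) (hv : c < R' v) :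
    upperContour R' c = upperContour (splitClass R R' (R u) c) (R u) := by
  ext j
  simp only [upperContour, mem_filter, mem_univ, true_and]
  unfold splitClass
  rcases lt_trichotomy (R j) (R u) with hj | hj | hj
  · have := h j u hj
    split_ifs <;> omega
  · split_ifs <;> omega
  · have := h v j (by omega)
    split_ifs <;> omega

end Contour

section Separation

variable {α : Type} [Fintype α] {R S : α → ℕ} {κ : ℕ}

theorem IsSeparation.rank_cases (hsep : IsSeparation R S κ) (j : α) :
    (R j < κ ∧ S j = R j) ∨ (R j = κ ∧ (S j = κ ∨ S j = κ + 1)) ∨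
      (κ < R j ∧ S j = R j + 1) := by
  obtain ⟨-, hlt, heq, hgt, -, -⟩ := hsep
  rcases lt_trichotomy (R j) κ with h | h | h
  exacts [Or.inl ⟨h, hlt j h⟩, Or.inr (Or.inl ⟨h, heq j h⟩), Or.inr (Or.inr ⟨h, hgt j h⟩)]

theorem IsSeparation.isRefinement (hsep : IsSeparation R S κ) : IsRefinement R S := by
  intro a b hab
  have := hsep.rank_cases a
  have := hsep.rank_cases b
  omega

theorem IsSeparation.canonical (hsep : IsSeparation R S κ) : Canonical S := by
  obtain ⟨hR, -, -, -, ⟨u, hu, hu'⟩, ⟨v, -, hv'⟩⟩ := id hsep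
  intro x k hk
  rcases lt_trichotomy k κ with h | rfl | h
  · obtain ⟨b, hb⟩ := hR u k (by omega)
    exact ⟨b, by have := hsep.rank_cases b; omega⟩
  · exact ⟨u, hu'⟩
  · rcases (show k = κ + 1 ∨ κ + 1 < k by omega) with rfl | h'
    · exact ⟨v, hv'⟩
    · obtain ⟨b, hb⟩ := hR x (k - 1) (by have := hsep.rank_cases x; omega)
      exact ⟨b, by have := hsep.rank_cases b; omega⟩

theorem probOf_filter_rank_congr (p : ℕ → Prop) [DecidablePred p] {x y : α → ℝ}
    (h : ∀ k, p k → probOf x (classOf R k) = probOf y (classOf R k)) :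
    probOf x (univ.filter fun j => p (R j)) = probOf y (univ.filter fun j => p (R j)) := by
  have hfib : ∀ z : α → ℝ, probOf z (univ.filter fun j => p (R j)) =
      ∑ k ∈ (univ.image R).filter p, probOf z (classOf R k) := fun z => by
    rw [probOf, ← sum_fiberwise_of_maps_to (g := R) (t := (univ.image R).filter p)
      (fun j hj => by simpa using hj)]
    refine sum_congr rfl fun k hk => ?_
    rw [probOf, classOf, filter_filter]
    exact sum_congr (filter_congr fun j _ => ⟨And.right, fun hj => ⟨hj ▸ (mem_filter.1 hk).2, hj⟩⟩)
      fun _ _ => rfl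
  rw [hfib, hfib]
  exact sum_congr rfl fun k hk => h k (mem_filter.1 hk).2

variable {φ : (α → ℕ) → α → ℝ}

theorem IsSeparation.probOf_upperContour_eq (hlot : ∀ R, IsLottery (φ R))
    (hupper : SepUpperInvariant φ) (hlower : SepLowerInvariant φ) (hsep : IsSeparation R S κ)
    (m : ℕ) : probOf (φ R) (upperContour R m) = probOf (φ S) (upperContour R m) := by
  rcases lt_or_ge m κ with hm | hm
  · exact probOf_filter_rank_congr (· ≤ m) fun k hk => hupper R S κ hsep k (by omega)
  · have hcompl : ∀ x : α → ℝ, IsLottery x →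
        probOf x (upperContour R m) = 1 - probOf x (univ.filter fun j => m < R j) := by
      intro x hx
      rw [← hx.2, ← sum_filter_add_sum_filter_not univ (fun j => R j ≤ m), probOf, probOf,
        upperContour]
      simp only [not_le, add_sub_cancel_right]
    rw [hcompl _ (hlot R), hcompl _ (hlot S),
      probOf_filter_rank_congr (m < ·) fun k hk => hlower R S κ hsep k (by omega)]

theorem IsSeparation.probOf_upperContour_split_le (hupper : SepUpperInvariant φ)
    (hresp : SepResponsive φ) (hsep : IsSeparation R S κ) :
    probOf (φ R) (upperContour S κ) ≤ probOf (φ S) (upperContour S κ) := by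
  have hsplit : ∀ x : α → ℝ, probOf x (upperContour S κ) =
      probOf x (univ.filter fun j => R j < κ) + probOf x (classOf S κ) := by
    intro x
    rw [probOf, ← sum_filter_add_sum_filter_not _ (fun j => R j < κ)]
    congr 2 <;> ext j <;> simp only [upperContour, classOf, mem_filter, mem_univ, true_and] <;>
      have := hsep.rank_cases j <;> omega
  rw [hsplit, hsplit, probOf_filter_rank_congr (· < κ) fun k hk => hupper R S κ hsep k hk]
  linarith [(hresp R S κ hsep).1]

end Separation

section MultiSeparation

variable {α : Type} [Fintype α] {R R' : α → ℕ}

def unsplitPairs (R R' : α → ℕ) : Finset (α × α) :=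
  univ.filter fun p => R p.1 = R p.2 ∧ R' p.1 < R' p.2

theorem card_unsplitPairs_lt {S : α → ℕ} (h : IsRefinement R S) {u v : α} (huv : R u = R v)
    (hu : R' u < R' v) (hS : S u ≠ S v) : (unsplitPairs S R').card < (unsplitPairs R R').card := by
  refine card_lt_card ⟨fun p hp => ?_, fun hsub => ?_⟩
  · simp only [unsplitPairs, mem_filter, mem_univ, true_and] at hp ⊢
    have := h p.1 p.2
    have := h p.2 p.1
    exact ⟨by omega, hp.2⟩
  · have := hsub (show (u, v) ∈ unsplitPairs R R' by simp [unsplitPairs, huv, hu])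
    simp only [unsplitPairs, mem_filter, mem_univ, true_and] at this
    exact hS this.1

theorem splitClass_spec (hms : IsMultiSeparation R R') {u v : α} {c : ℕ} (huv : R u = R v)
    (hu : R' u ≤ c) (hv : c < R' v) :
    IsSeparation R (splitClass R R' (R u) c) (R u) ∧
      IsMultiSeparation (splitClass R R' (R u) c) R' ∧
      (unsplitPairs (splitClass R R' (R u) c) R').card < (unsplitPairs R R').card := by
  have hsep : IsSeparation R (splitClass R R' (R u) c) (R u) := by
    refine ⟨hms.1, fun a ha => ?_, fun a ha => ?_, fun a ha => ?_, ⟨u, rfl, ?_⟩, ⟨v, huv.symm, ?_⟩⟩ <;>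
      unfold splitClass <;> split_ifs <;> omega
  refine ⟨hsep, ⟨hsep.canonical, hms.2.1, isRefinement_splitClass hms.2.2 _ _⟩,
    card_unsplitPairs_lt hsep.isRefinement huv (by omega) ?_⟩
  unfold splitClass
  split_ifs <;> omega

theorem IsMultiSeparation.eq_of_forall_not_lt (hms : IsMultiSeparation R R')
    (h : ∀ a b, R a = R b → ¬R' a < R' b) : R = R' := by
  have hrev : IsRefinement R' R := by
    intro a b hab
    rcases lt_trichotomy (R a) (R b) with hR | hR | hR
    · exact hR
    · exact absurd hab (h a b hR)
    · exact absurd (hms.2.2 b a hR) (by omega)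
  funext u
  exact le_antisymm (hms.1.le_of_isRefinement hms.2.2 u) (hms.2.1.le_of_isRefinement hrev u)

variable {φ : (α → ℕ) → α → ℝ}

theorem sd_of_forall_sd_splitClass (hlot : ∀ R, IsLottery (φ R)) (hresp : SepResponsive φ)
    (hupper : SepUpperInvariant φ) (hlower : SepLowerInvariant φ)
    (hms : IsMultiSeparation R R') {a b : α} (hab : R a = R b) (hab' : R' a < R' b)
    (ih : ∀ u v c, R u = R v → R' u ≤ c → c < R' v →
      SD (splitClass R R' (R u) c) (φ (splitClass R R' (R u) c)) (φ R') ∧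
        SD R' (φ R') (φ (splitClass R R' (R u) c))) :
    SD R (φ R) (φ R') ∧ SD R' (φ R') (φ R) := by
  obtain ⟨hsep, -, -⟩ := splitClass_spec hms hab le_rfl hab'
  obtain ⟨ih₁, ih₂⟩ := ih a b (R' a) hab le_rfl hab'
  refine ⟨sd_iff_probOf_upperContour.2 fun a₀ => ?_, sd_iff_probOf_upperContour.2 fun a₀ => ?_⟩
  · rw [hsep.probOf_upperContour_eq hlot hupper hlower]
    exact ih₁.of_isRefinement hsep.isRefinement a₀
  · by_cases hsat : ∀ p q, R p = R q → R' p ≤ R' a₀ → R' q ≤ R' a₀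
    · obtain ⟨w, hw⟩ := exists_upperContour_eq_of_saturated hms.2.2 hsat le_rfl
      rw [hw, hsep.probOf_upperContour_eq hlot hupper hlower, ← hw]
      exact ih₂ a₀
    · push Not at hsat
      obtain ⟨u, v, huv, hu, hv⟩ := hsat
      obtain ⟨hsep', -, -⟩ := splitClass_spec hms huv hu hv
      calc probOf (φ R) (upperContour R' (R' a₀))
          ≤ probOf (φ (splitClass R R' (R u) (R' a₀))) (upperContour R' (R' a₀)) := by
            rw [upperContour_splitClass hms.2.2 huv hu hv]
            exact hsep'.probOf_upperContour_split_le hupper hresp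
        _ ≤ probOf (φ R') (upperContour R' (R' a₀)) := (ih u v (R' a₀) huv hu hv).2 a₀

end MultiSeparation

/-- If a mechanism is separation responsive, separation upper invariant and
separation lower invariant, then it is multi-separation strategyproof. -/
theorem axioms_imply_multi_sep_sp {α : Type} [Fintype α]
    (φ : (α → ℕ) → α → ℝ) (hlot : ∀ R, IsLottery (φ R))
    (hresp : SepResponsive φ)
    (hupper : SepUpperInvariant φ) (hlower : SepLowerInvariant φ) :
    ∀ R R', IsMultiSeparation R R' →
      SD R (φ R) (φ R') ∧ SD R' (φ R') (φ R) := by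
  intro R R' hms
  induction hn : (unsplitPairs R R').card using Nat.strong_induction_on generalizing R with
  | _ n ih =>
    by_cases hsplit : ∃ a b, R a = R b ∧ R' a < R' b
    · obtain ⟨a, b, hab, hab'⟩ := hsplit
      refine sd_of_forall_sd_splitClass hlot hresp hupper hlower hms hab hab'
        fun u v c huv hu hv => ?_
      obtain ⟨-, hms', hlt⟩ := splitClass_spec hms huv hu hv
      exact ih _ (hn ▸ hlt) _ hms' rfl
    · push Not at hsplit
      obtain rfl := hms.eq_of_forall_not_lt fun a b hab => (hsplit a b hab).not_gt
      exact ⟨fun _ => le_rfl, fun _ => le_rfl⟩
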